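/- arXiv:1805.04182 — 2 statements merged into one kernel-verified Lean document; each statement's English description precedes it below -/
import Mathlib

section
/- Let A₁, A₂ be real square matrices with ψ(A₁) ≤ ψ(A₂) entrywise. If ψ(A₂) is Hurwitz then ψ(A₁) is Hurwitz. -/
/-!
Shifting by `s • 1` makes a Metzler matrix entrywise nonnegative, and on nonnegative matrices the
spectral radius is monotone (Gelfand's formula, since the powers are entrywise monotone). So if
`μ` is an eigenvalue of `M₁ ≤ M₂` and every eigenvalue `ν` of `M₂` has `‖ν‖ ≤ R` and `ν.re ≤ a`,
then `s + μ.re ≤ ρ(M₁ + s • 1) ≤ ρ(M₂ + s • 1) ≤ √((s + a)² + R²)` for all large `s`, which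
forces `μ.re ≤ a`.
-/

noncomputable def metzlerPart {n : ℕ} (A : Matrix (Fin n) (Fin n) ℝ) : Matrix (Fin n) (Fin n) ℝ :=
  Matrix.of fun i j => if i = j then A i j else |A i j|

def Hurwitz {n : ℕ} (A : Matrix (Fin n) (Fin n) ℝ) : Prop :=
  ∀ μ ∈ spectrum ℂ (A.map (Complex.ofReal)), μ.re < 0

open Filter Complex
open scoped Pointwise

lemma le_of_eventually_sq_add_le {x a C : ℝ}
    (h : ∀ᶠ s in atTop, (s + x) ^ 2 ≤ (s + a) ^ 2 + C) : x ≤ a := by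
  by_contra! hax
  have hgrowth : Tendsto (fun s : ℝ => (x - a) * (2 * s + x + a)) atTop atTop :=
    Tendsto.const_mul_atTop (sub_pos.2 hax) <|
      tendsto_atTop_add_const_right _ _ <| tendsto_atTop_add_const_right _ _ <|
        tendsto_id.const_mul_atTop two_pos
  obtain ⟨s, hs, hC⟩ := (h.and (hgrowth.eventually_gt_atTop C)).exists
  nlinarith

lemma Complex.sq_norm_ofReal_add_le {s a R : ℝ} {ν : ℂ} (hs : 0 ≤ s) (hνR : ‖ν‖ ≤ R)
    (hνa : ν.re ≤ a) : ‖(s : ℂ) + ν‖ ^ 2 ≤ (s + a) ^ 2 + R ^ 2 := by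
  have hsum : ‖(s : ℂ) + ν‖ ^ 2 = s ^ 2 + 2 * s * ν.re + ‖ν‖ ^ 2 := by
    simp only [Complex.sq_norm, normSq_apply, add_re, ofReal_re, add_im, ofReal_im, zero_add]
    ring
  nlinarith [norm_nonneg ν, sq_nonneg a]

namespace Matrix

def IsMetzler {ι α : Type*} [Zero α] [LE α] (M : Matrix ι ι α) : Prop :=
  ∀ i j, i ≠ j → 0 ≤ M i j

lemma pow_apply_le_pow_apply {ι α : Type*} [Fintype ι] [DecidableEq ι] [Semiring α]
    [PartialOrder α] [IsOrderedRing α] {B₁ B₂ : Matrix ι ι α} (h₀ : ∀ i j, 0 ≤ B₁ i j)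
    (h : ∀ i j, B₁ i j ≤ B₂ i j) (k : ℕ) (i j : ι) : (B₁ ^ k) i j ≤ (B₂ ^ k) i j := by
  induction k generalizing j with
  | zero => rfl
  | succ k ih =>
    simp only [pow_succ, mul_apply]
    exact Finset.sum_le_sum fun l _ =>
      mul_le_mul (ih l) (h l j) (h₀ l j) ((pow_apply_nonneg h₀ k i l).trans (ih l))

-- Gelfand's formula holds for any Banach algebra norm; the `ℓ∞` operator norm is the one that is
-- monotone in the absolute values of the entries.
attribute [local instance] Matrix.linftyOpSeminormedAddCommGroup Matrix.linftyOpNormedRing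
  Matrix.linftyOpNormedAlgebra

lemma linfty_opNNNorm_mono {m n α : Type*} [Fintype m] [Fintype n] [SeminormedAddCommGroup α]
    {X Y : Matrix m n α} (h : ∀ i j, ‖X i j‖ ≤ ‖Y i j‖) : ‖X‖₊ ≤ ‖Y‖₊ := by
  rw [linfty_opNNNorm_def, linfty_opNNNorm_def]
  exact Finset.sup_mono_fun fun i _ => Finset.sum_le_sum fun j _ => h i j

variable {ι : Type*} [Fintype ι] [DecidableEq ι]

lemma spectralRadius_map_ofReal_mono {B₁ B₂ : Matrix ι ι ℝ} (h₀ : ∀ i j, 0 ≤ B₁ i j)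
    (h : ∀ i j, B₁ i j ≤ B₂ i j) :
    spectralRadius ℂ (B₁.map ofReal) ≤ spectralRadius ℂ (B₂.map ofReal) := by
  refine le_of_tendsto_of_tendsto'
    (spectrum.pow_nnnorm_pow_one_div_tendsto_nhds_spectralRadius _)
    (spectrum.pow_nnnorm_pow_one_div_tendsto_nhds_spectralRadius _) fun k => ?_
  have hnorm : ‖(B₁ ^ k).map ofReal‖₊ ≤ ‖(B₂ ^ k).map ofReal‖₊ :=
    linfty_opNNNorm_mono fun i j => by
      have hle := pow_apply_le_pow_apply h₀ h k i j
      simpa only [map_apply, norm_real, Real.norm_of_nonneg (pow_apply_nonneg h₀ k i j),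
        Real.norm_of_nonneg ((pow_apply_nonneg h₀ k i j).trans hle)] using hle
  have hpow (B : Matrix ι ι ℝ) : B.map ofReal ^ k = (B ^ k).map ofReal :=
    (map_pow ofRealHom.mapMatrix B k).symm
  rw [hpow, hpow]
  gcongr

lemma norm_le_of_mem_spectrum_of_le {B₁ B₂ : Matrix ι ι ℝ} (h₀ : ∀ i j, 0 ≤ B₁ i j)
    (h : ∀ i j, B₁ i j ≤ B₂ i j) {r : ℝ} (hr : 0 ≤ r)
    (hB₂ : ∀ ξ ∈ spectrum ℂ (B₂.map ofReal), ‖ξ‖ ≤ r) {ξ : ℂ}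
    (hξ : ξ ∈ spectrum ℂ (B₁.map ofReal)) : ‖ξ‖ ≤ r := by
  have hρ₂ : spectralRadius ℂ (B₂.map ofReal) ≤ ENNReal.ofReal r :=
    iSup₂_le fun ζ hζ => by
      rw [← enorm_eq_nnnorm, ← ofReal_norm]
      exact ENNReal.ofReal_le_ofReal (hB₂ ζ hζ)
  have hρ₁ : (‖ξ‖₊ : ENNReal) ≤ spectralRadius ℂ (B₁.map ofReal) :=
    le_iSup₂ (f := fun k (_ : k ∈ spectrum ℂ (B₁.map ofReal)) => (‖k‖₊ : ENNReal)) ξ hξ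
  have hξr := hρ₁.trans ((spectralRadius_map_ofReal_mono h₀ h).trans hρ₂)
  rwa [← enorm_eq_nnnorm, ← ofReal_norm, ENNReal.ofReal_le_ofReal_iff hr] at hξr

lemma spectrum_map_ofReal_add_algebraMap (M : Matrix ι ι ℝ) (s : ℝ) :
    spectrum ℂ ((M + algebraMap ℝ _ s).map ofReal) = (s : ℂ) +ᵥ spectrum ℂ (M.map ofReal) := by
  rw [spectrum.vadd_eq, add_comm]
  congr 1
  ext i j
  simp [algebraMap_matrix_apply, apply_ite ofReal]

lemma IsMetzler.re_le_of_mem_spectrum_of_le {M₁ M₂ : Matrix ι ι ℝ} (hM₁ : M₁.IsMetzler)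
    (h : ∀ i j, M₁ i j ≤ M₂ i j) {a : ℝ} (ha : ∀ ν ∈ spectrum ℂ (M₂.map ofReal), ν.re ≤ a)
    {μ : ℂ} (hμ : μ ∈ spectrum ℂ (M₁.map ofReal)) : μ.re ≤ a := by
  obtain ⟨R, hR⟩ := (finite_spectrum (M₂.map ofReal)).isBounded.exists_norm_le
  refine le_of_eventually_sq_add_le (C := R ^ 2) ?_
  filter_upwards [eventually_ge_atTop 0, eventually_all.2 fun i => eventually_ge_atTop (-M₁ i i)]
    with s hs hdiag
  have hshift₀ : ∀ i j, 0 ≤ (M₁ + algebraMap ℝ _ s) i j := by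
    intro i j
    rcases eq_or_ne i j with rfl | hij
    · simp only [add_apply, algebraMap_matrix_apply, if_pos, Algebra.algebraMap_self,
        RingHom.id_apply]
      linarith [hdiag i]
    · simpa [algebraMap_matrix_apply, hij] using hM₁ i j hij
  have hshift : ∀ i j, (M₁ + algebraMap ℝ _ s) i j ≤ (M₂ + algebraMap ℝ _ s) i j :=
    fun i j => add_le_add (h i j) le_rfl
  have hbound : ∀ ξ ∈ spectrum ℂ ((M₂ + algebraMap ℝ _ s).map ofReal),
      ‖ξ‖ ≤ √((s + a) ^ 2 + R ^ 2) := by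
    rw [spectrum_map_ofReal_add_algebraMap]
    rintro _ ⟨ν, hν, rfl⟩
    exact Real.le_sqrt_of_sq_le (sq_norm_ofReal_add_le hs (hR ν hν) (ha ν hν))
  have hμs : (s : ℂ) + μ ∈ spectrum ℂ ((M₁ + algebraMap ℝ _ s).map ofReal) := by
    rw [spectrum_map_ofReal_add_algebraMap]
    exact Set.vadd_mem_vadd_set hμ
  have hnorm := norm_le_of_mem_spectrum_of_le hshift₀ hshift (Real.sqrt_nonneg _) hbound hμs
  calc (s + μ.re) ^ 2 = ((s : ℂ) + μ).re ^ 2 := by simp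
    _ ≤ ‖(s : ℂ) + μ‖ ^ 2 := sq_le_sq.2 ((abs_re_le_norm _).trans (le_abs_self _))
    _ ≤ (s + a) ^ 2 + R ^ 2 := (Real.le_sqrt (norm_nonneg _) (by positivity)).1 hnorm

end Matrix

lemma isMetzler_metzlerPart {n : ℕ} (A : Matrix (Fin n) (Fin n) ℝ) :
    (metzlerPart A).IsMetzler := fun i j hij => by
  simp only [metzlerPart, Matrix.of_apply, if_neg hij, abs_nonneg]

theorem metzlerPart_hurwitz_mono {n : ℕ} (A₁ A₂ : Matrix (Fin n) (Fin n) ℝ)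
    (h : ∀ i j, metzlerPart A₁ i j ≤ metzlerPart A₂ i j)
    (h₂ : Hurwitz (metzlerPart A₂)) : Hurwitz (metzlerPart A₁) := by
  obtain ⟨b, hb, hbound⟩ := (Matrix.finite_spectrum ((metzlerPart A₂).map ofReal)).isCompact
    |>.exists_forall_le' (f := fun ν : ℂ => -ν.re) continuous_re.neg.continuousOn (a := 0)
      fun ν hν => neg_pos.2 (h₂ ν hν)
  intro μ hμ
  have hμb : μ.re ≤ -b := (isMetzler_metzlerPart A₁).re_le_of_mem_spectrum_of_le h
    (fun ν hν => le_neg.1 (hbound ν hν)) hμ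
  linarith
end

section
/- With p_x(t) = |e^{At}| p_x(0) + ∫₀ᵗ |e^{A(t−τ)} B| p_w(τ) dτ and p̌_x(t) = e^{ψ(A)t} p_x(0) + ∫₀ᵗ e^{ψ(A)(t−τ)} |B| p_w(τ) dτ, one has p_x(t) ≤ p̌_x(t) componentwise for all t ≥ 0; moreover p̌_x satisfies the linear ODE p̌̇_x(t) = ψ(A) p̌_x(t) + |B| p_w(t), p̌_x(0) = p_x(0). -/
noncomputable def entAbs {m n : ℕ} (A : Matrix (Fin m) (Fin n) ℝ) : Matrix (Fin m) (Fin n) ℝ :=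
  Matrix.of fun i j => |A i j|

/-!
For `c` at least the largest negative diagonal entry of `A`, the matrix `t • A + (t c) • 1` is
entrywise dominated in absolute value by `t • ψ(A) + (t c) • 1`. Entrywise domination passes to
powers and hence to the exponential series, and the scalar factor `e^{tc}` cancels, so
`|e^{tA}| ≤ e^{tψ(A)}`; the bound `p_x ≤ p̌_x` then follows from monotonicity of the integral,
as `p_x(0)` and `p_w` are nonnegative. The integral form of the ODE is Duhamel's formula:
`∫₀ᵗ M e^{sM} v ds = e^{tM} v - v`, and exchanging the order of integration over the triangle
`0 ≤ τ ≤ s ≤ t` turns `∫₀ᵗ M ∫₀ˢ e^{(s-τ)M} g(τ) dτ ds` into `∫₀ᵗ (e^{(t-τ)M} - 1) g(τ) dτ`.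
-/

open NormedSpace MeasureTheory Set
open scoped Matrix Nat

theorem abs_le_of_hasSum_of_abs_le {f g : ℕ → ℝ} {a b : ℝ} (hf : HasSum f a) (hg : HasSum g b)
    (h : ∀ k, |f k| ≤ g k) : |a| ≤ b :=
  abs_le.2 ⟨by simpa using hasSum_le (fun k => neg_le_of_abs_le (h k)) hg.neg hf,
    hasSum_le (fun k => le_of_abs_le (h k)) hf hg⟩

namespace Matrix

variable {l m n : Type*}

theorem abs_mul_apply_le [Fintype m] {M M' : Matrix l m ℝ} {N N' : Matrix m n ℝ}
    (hM : ∀ i j, |M i j| ≤ M' i j) (hN : ∀ i j, |N i j| ≤ N' i j) (i : l) (k : n) :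
    |(M * N) i k| ≤ (M' * N') i k := by
  simp only [mul_apply]
  refine (Finset.abs_sum_le_sum_abs _ _).trans (Finset.sum_le_sum fun j _ => ?_)
  rw [abs_mul]
  exact mul_le_mul (hM i j) (hN j k) (abs_nonneg _) ((abs_nonneg _).trans (hM i j))

variable [Fintype n] [DecidableEq n]

theorem abs_pow_apply_le {M N : Matrix n n ℝ} (h : ∀ i j, |M i j| ≤ N i j) (k : ℕ) :
    ∀ i j, |(M ^ k) i j| ≤ (N ^ k) i j := by
  induction k with
  | zero => intro i j; simp only [pow_zero, one_apply]; split_ifs <;> simp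
  | succ k ih => rw [pow_succ, pow_succ]; exact abs_mul_apply_le ih h

theorem abs_exp_apply_le {M N : Matrix n n ℝ} (h : ∀ i j, |M i j| ≤ N i j) (i j : n) :
    |exp M i j| ≤ exp N i j := by
  open scoped Norms.Operator in
  have hasSum_apply (X : Matrix n n ℝ) :
      HasSum (fun k : ℕ => ((k ! : ℝ)⁻¹ • X ^ k) i j) (exp X i j) :=
    Pi.hasSum.1 (Pi.hasSum.1 (exp_series_hasSum_exp' (𝕂 := ℝ) X) i) j
  refine abs_le_of_hasSum_of_abs_le (hasSum_apply M) (hasSum_apply N) fun k => ?_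
  simp only [smul_apply, smul_eq_mul, abs_mul, abs_inv, Nat.abs_cast]
  exact mul_le_mul_of_nonneg_left (abs_pow_apply_le h k i j) (by positivity)

theorem exp_add_smul_one (M : Matrix n n ℝ) (c : ℝ) :
    exp (M + c • 1) = Real.exp c • exp M := by
  have exp_scalar : exp (algebraMap ℝ (Matrix n n ℝ) c) = algebraMap ℝ _ (Real.exp c) := by
    open scoped Norms.Operator in
    rw [Real.exp_eq_exp_ℝ]
    exact (algebraMap_exp_comm c).symm
  rw [exp_add_of_commute _ _ ((Commute.one_right M).smul_right c),
    ← Algebra.algebraMap_eq_smul_one, exp_scalar, Algebra.algebraMap_eq_smul_one, mul_smul_one]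

theorem continuous_exp_smul (M : Matrix n n ℝ) : Continuous fun s : ℝ => exp (s • M) := by
  open scoped Norms.Operator in
  exact exp_continuous.comp (continuous_id.smul continuous_const)

theorem hasDerivAt_exp_smul_mulVec (M : Matrix n n ℝ) (v : n → ℝ) (s : ℝ) :
    HasDerivAt (fun r : ℝ => exp (r • M) *ᵥ v) (M *ᵥ (exp (s • M) *ᵥ v)) s := by
  open scoped Norms.Operator in
  rw [mulVec_mulVec]
  exact ((mulVecBilin ℝ ℝ).flip v).toContinuousLinearMap.hasFDerivAt.comp_hasDerivAt s
    (hasDerivAt_exp_smul_const' M s)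

theorem integral_mulVec_exp_smul_mulVec (M : Matrix n n ℝ) (v : n → ℝ) (a b : ℝ) :
    ∫ s in a..b, M *ᵥ (exp (s • M) *ᵥ v) = exp (b • M) *ᵥ v - exp (a • M) *ᵥ v :=
  intervalIntegral.integral_eq_sub_of_hasDerivAt (fun s _ => hasDerivAt_exp_smul_mulVec M v s)
    ((continuous_const.matrix_mulVec ((continuous_exp_smul M).matrix_mulVec
      continuous_const)).intervalIntegrable _ _)

theorem exp_sub_smul (M : Matrix n n ℝ) (s τ : ℝ) :
    exp ((s - τ) • M) = exp (s • M) * exp (-τ • M) := by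
  rw [sub_eq_add_neg, add_smul]
  exact exp_add_of_commute _ _ ((Commute.refl M).smul_left _ |>.smul_right _)

theorem integral_mulVec_exp_smul_mulVec_sub (M : Matrix n n ℝ) (v : n → ℝ) (τ t : ℝ) :
    ∫ s in τ..t, M *ᵥ (exp ((s - τ) • M) *ᵥ v) = exp ((t - τ) • M) *ᵥ v - v := by
  rw [intervalIntegral.integral_comp_sub_right (fun r => M *ᵥ (exp (r • M) *ᵥ v)), sub_self,
    integral_mulVec_exp_smul_mulVec, zero_smul, exp_zero, one_mulVec]

end Matrix

section Integrability

variable {m n : Type*} [Fintype m] [Fintype n]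

theorem IntervalIntegrable.continuous_mulVec {K : ℝ → Matrix m n ℝ} (hK : Continuous K)
    {g : ℝ → n → ℝ} {a b : ℝ} (hg : IntervalIntegrable g volume a b) :
    IntervalIntegrable (fun τ => K τ *ᵥ g τ) volume a b := by
  rw [intervalIntegrable_iff] at hg ⊢
  refine integrable_pi_iff.2 fun i => ?_
  simp only [Matrix.mulVec, dotProduct]
  refine integrable_finsetSum _ fun j _ => ?_
  exact IntegrableOn.continuousOn_mul_of_subset (hK.matrix_elem i j).continuousOn
    (integrable_pi_iff.1 hg j) isCompact_uIcc measurableSet_uIoc uIoc_subset_uIcc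

theorem integrableOn_mulVec_comp_sub {H : ℝ → Matrix m n ℝ} (hH : Continuous H)
    {g : ℝ → n → ℝ} {a b : ℝ} (hg : IntegrableOn g (Ioc a b)) :
    IntegrableOn (fun p : ℝ × ℝ => H (p.1 - p.2) *ᵥ g p.2) (Ioc a b ×ˢ Ioc a b) := by
  have hg_snd : IntegrableOn (fun p : ℝ × ℝ => g p.2) (Ioc a b ×ˢ Ioc a b) := by
    rw [IntegrableOn, Measure.volume_eq_prod, ← Measure.prod_restrict]
    exact hg.comp_snd _
  refine integrable_pi_iff.2 fun i => ?_
  simp only [Matrix.mulVec, dotProduct]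
  refine integrable_finsetSum _ fun j _ => ?_
  exact IntegrableOn.continuousOn_mul_of_subset
    ((hH.comp (continuous_fst.sub continuous_snd)).matrix_elem i j).continuousOn
    (integrable_pi_iff.1 hg_snd j) (isCompact_Icc.prod isCompact_Icc)
    (measurableSet_Ioc.prod measurableSet_Ioc)
    (prod_mono Ioc_subset_Icc_self Ioc_subset_Icc_self)

theorem intervalIntegrable_of_measurable_of_abs_le {f : ℝ → n → ℝ}
    (hf : ∀ i, Measurable fun τ => f τ i) {C : ℝ} (hC : ∀ τ i, |f τ i| ≤ C) (a b : ℝ) :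
    IntervalIntegrable f volume a b :=
  intervalIntegrable_const.mono_fun' (measurable_pi_iff.2 hf).aestronglyMeasurable
    (ae_of_all _ fun τ => (pi_norm_le_iff_of_nonneg (abs_nonneg C)).2 fun i =>
      (Real.norm_eq_abs _).trans_le ((hC τ i).trans (le_abs_self C)))

end Integrability

theorem intervalIntegral_intervalIntegral_triangle_swap {E : Type*} [NormedAddCommGroup E]
    [NormedSpace ℝ E] {F : ℝ → ℝ → E} {a b : ℝ} (hab : a ≤ b)
    (hF : IntegrableOn (Function.uncurry F) (Ioc a b ×ˢ Ioc a b)) :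
    ∫ s in a..b, ∫ τ in a..s, F s τ = ∫ τ in a..b, ∫ s in τ..b, F s τ := by
  set G : ℝ → ℝ → E := fun s τ => (Iio s).indicator (F s) τ
  have hG : IntegrableOn (Function.uncurry G) (uIoc a b ×ˢ uIoc a b) := by
    rw [uIoc_of_le hab]
    exact hF.indicator (measurableSet_lt measurable_snd measurable_fst)
  calc ∫ s in a..b, ∫ τ in a..s, F s τ = ∫ s in a..b, ∫ τ in a..b, G s τ := by
        refine intervalIntegral.integral_congr fun s hs => ?_
        rw [uIcc_of_le hab] at hs
        rw [intervalIntegral.integral_of_le hab, intervalIntegral.integral_of_le hs.1,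
          setIntegral_indicator measurableSet_Iio, integral_Ioc_eq_integral_Ioo]
        congr 2
        ext τ
        simp only [mem_Ioo, mem_inter_iff, mem_Ioc, mem_Iio]
        exact ⟨fun h => ⟨⟨h.1, h.2.le.trans hs.2⟩, h.2⟩, fun h => ⟨h.1.1, h.2⟩⟩
    _ = ∫ τ in a..b, ∫ s in a..b, G s τ := intervalIntegral_intervalIntegral_swap hG
    _ = ∫ τ in a..b, ∫ s in τ..b, F s τ := by
        refine intervalIntegral.integral_congr fun τ hτ => ?_
        rw [uIcc_of_le hab] at hτ
        have : (fun s => G s τ) = (Ioi τ).indicator fun s => F s τ := rfl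
        rw [this, intervalIntegral.integral_of_le hab, intervalIntegral.integral_of_le hτ.2,
          setIntegral_indicator measurableSet_Ioi, Ioc_inter_Ioi, max_eq_right hτ.1]

namespace Matrix

variable {m n : Type*} [Fintype m] [Fintype n]

theorem mulVec_intervalIntegral (K : Matrix m n ℝ) {f : ℝ → n → ℝ} {a b : ℝ}
    (hf : IntervalIntegrable f volume a b) :
    K *ᵥ ∫ τ in a..b, f τ = ∫ τ in a..b, K *ᵥ f τ :=
  (K.mulVecLin.toContinuousLinearMap.intervalIntegral_comp_comm hf).symm

variable [DecidableEq n] (M : Matrix n n ℝ) {g : ℝ → n → ℝ}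

theorem continuous_integral_exp_sub_smul_mulVec
    (hg : ∀ a b, IntervalIntegrable g volume a b) :
    Continuous fun s => ∫ τ in 0..s, exp ((s - τ) • M) *ᵥ g τ := by
  have hkernel_int (a b : ℝ) : IntervalIntegrable (fun τ => exp (-τ • M) *ᵥ g τ) volume a b :=
    (hg a b).continuous_mulVec ((continuous_exp_smul M).comp continuous_neg)
  have factor (s : ℝ) : ∫ τ in 0..s, exp ((s - τ) • M) *ᵥ g τ =
      exp (s • M) *ᵥ ∫ τ in 0..s, exp (-τ • M) *ᵥ g τ := by
    simp_rw [exp_sub_smul, ← mulVec_mulVec]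
    exact (mulVec_intervalIntegral _ (hkernel_int 0 s)).symm
  simp_rw [factor]
  exact (continuous_exp_smul M).matrix_mulVec (intervalIntegral.continuous_primitive hkernel_int 0)

theorem integral_mulVec_integral_exp_sub_smul_mulVec
    (hg : ∀ a b, IntervalIntegrable g volume a b) {t : ℝ} (ht : 0 ≤ t) :
    ∫ s in 0..t, M *ᵥ ∫ τ in 0..s, exp ((s - τ) • M) *ᵥ g τ =
      (∫ τ in 0..t, exp ((t - τ) • M) *ᵥ g τ) - ∫ τ in 0..t, g τ := by
  have hker (s : ℝ) : Continuous fun τ : ℝ => exp ((s - τ) • M) :=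
    (continuous_exp_smul M).comp (continuous_const.sub continuous_id)
  calc ∫ s in 0..t, M *ᵥ ∫ τ in 0..s, exp ((s - τ) • M) *ᵥ g τ
        = ∫ s in 0..t, ∫ τ in 0..s, (M * exp ((s - τ) • M)) *ᵥ g τ :=
          intervalIntegral.integral_congr fun s _ => by
            simp_rw [← mulVec_mulVec]
            exact mulVec_intervalIntegral M ((hg 0 s).continuous_mulVec (hker s))
    _ = ∫ τ in 0..t, ∫ s in τ..t, (M * exp ((s - τ) • M)) *ᵥ g τ :=
          intervalIntegral_intervalIntegral_triangle_swap ht (integrableOn_mulVec_comp_sub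
            (continuous_const.matrix_mul (continuous_exp_smul M)) (hg 0 t).1)
    _ = ∫ τ in 0..t, (exp ((t - τ) • M) *ᵥ g τ - g τ) :=
          intervalIntegral.integral_congr fun τ _ => by
            simp_rw [← mulVec_mulVec]
            exact integral_mulVec_exp_smul_mulVec_sub M (g τ) τ t
    _ = _ := intervalIntegral.integral_sub ((hg 0 t).continuous_mulVec (hker t)) (hg 0 t)

theorem eq_add_integral_of_duhamel (hg : ∀ a b, IntervalIntegrable g volume a b) {v : n → ℝ}
    {y : ℝ → n → ℝ} (hy : ∀ s, y s = exp (s • M) *ᵥ v + ∫ τ in 0..s, exp ((s - τ) • M) *ᵥ g τ)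
    {t : ℝ} (ht : 0 ≤ t) :
    y t = v + ∫ s in 0..t, (M *ᵥ y s + g s) := by
  set u := fun s => ∫ τ in 0..s, exp ((s - τ) • M) *ᵥ g τ
  have h_free : IntervalIntegrable (fun s => M *ᵥ (exp (s • M) *ᵥ v)) volume 0 t :=
    (continuous_const.matrix_mulVec
      ((continuous_exp_smul M).matrix_mulVec continuous_const)).intervalIntegrable 0 t
  have h_forced : IntervalIntegrable (fun s => M *ᵥ u s) volume 0 t :=
    (continuous_const.matrix_mulVec
      (continuous_integral_exp_sub_smul_mulVec M hg)).intervalIntegrable 0 t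
  have split (s : ℝ) : M *ᵥ y s + g s = M *ᵥ (exp (s • M) *ᵥ v) + (M *ᵥ u s + g s) := by
    rw [hy, mulVec_add, add_assoc]
  rw [intervalIntegral.integral_congr fun s _ => split s,
    intervalIntegral.integral_add h_free (h_forced.add (hg 0 t)),
    intervalIntegral.integral_add h_forced (hg 0 t), integral_mulVec_exp_smul_mulVec,
    integral_mulVec_integral_exp_sub_smul_mulVec M hg ht, hy t, zero_smul, exp_zero, one_mulVec]
  abel

end Matrix

theorem continuous_entAbs {m n : ℕ} : Continuous (entAbs : Matrix (Fin m) (Fin n) ℝ → _) :=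
  continuous_matrix fun i j => (continuous_id.matrix_elem i j).abs

theorem entAbs_mulVec_le {m n : ℕ} {X Y : Matrix (Fin m) (Fin n) ℝ} (h : ∀ i j, |X i j| ≤ Y i j)
    {v : Fin n → ℝ} (hv : 0 ≤ v) : entAbs X *ᵥ v ≤ Y *ᵥ v := fun i => by
  simp only [entAbs, Matrix.mulVec, dotProduct, Matrix.of_apply]
  exact Finset.sum_le_sum fun j _ => mul_le_mul_of_nonneg_right (h i j) (hv j)

theorem abs_exp_smul_apply_le_exp_smul_metzlerPart {n : ℕ} (A : Matrix (Fin n) (Fin n) ℝ)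
    {t : ℝ} (ht : 0 ≤ t) (i j : Fin n) : |exp (t • A) i j| ≤ exp (t • metzlerPart A) i j := by
  set c := ∑ k, |A k k|
  have hc (k : Fin n) : 0 ≤ A k k + c := by
    have := Finset.single_le_sum (f := fun k => |A k k|) (fun _ _ => abs_nonneg _)
      (Finset.mem_univ k)
    linarith [neg_abs_le (A k k)]
  have shifted (i j : Fin n) :
      |(t • A + (t * c) • 1) i j| ≤ (t • metzlerPart A + (t * c) • 1) i j := by
    by_cases hij : i = j
    · subst hij
      simp only [metzlerPart, Matrix.add_apply, Matrix.smul_apply, Matrix.one_apply_eq,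
        Matrix.of_apply, if_true, smul_eq_mul, mul_one]
      rw [← mul_add, abs_of_nonneg (mul_nonneg ht (hc i))]
    · simp [metzlerPart, hij, abs_mul, abs_of_nonneg ht]
  have := Matrix.abs_exp_apply_le shifted i j
  rwa [Matrix.exp_add_smul_one, Matrix.exp_add_smul_one, Matrix.smul_apply, Matrix.smul_apply,
    smul_eq_mul, smul_eq_mul, abs_mul, abs_of_pos (Real.exp_pos _),
    mul_le_mul_iff_right₀ (Real.exp_pos _)] at this

theorem metzler_overapproximation {n nw : ℕ}
    (A : Matrix (Fin n) (Fin n) ℝ) (B : Matrix (Fin n) (Fin nw) ℝ)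
    (px0 : Fin n → ℝ) (hpx0 : ∀ i, 0 ≤ px0 i)
    (pw : ℝ → Fin nw → ℝ) (hpwmeas : ∀ i, Measurable fun τ => pw τ i)
    (hpwbdd : ∃ C, ∀ τ, ∀ i, |pw τ i| ≤ C) (hpw : ∀ τ, ∀ i, 0 ≤ pw τ i)
    (px pcheck : ℝ → Fin n → ℝ)
    (hpx : ∀ t, px t = (entAbs (NormedSpace.exp (t • A))).mulVec px0
        + ∫ τ in (0:ℝ)..t, (entAbs (NormedSpace.exp ((t - τ) • A) * B)).mulVec (pw τ))
    (hpcheck : ∀ t, pcheck t = (NormedSpace.exp (t • metzlerPart A)).mulVec px0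
        + ∫ τ in (0:ℝ)..t,
            (NormedSpace.exp ((t - τ) • metzlerPart A)).mulVec ((entAbs B).mulVec (pw τ))) :
    (∀ t : ℝ, 0 ≤ t → ∀ i, px t i ≤ pcheck t i) ∧
      pcheck 0 = px0 ∧
      (∀ t : ℝ, 0 ≤ t →
        pcheck t = px0 + ∫ s in (0:ℝ)..t,
          ((metzlerPart A).mulVec (pcheck s) + (entAbs B).mulVec (pw s))) := by
  obtain ⟨C, hC⟩ := hpwbdd
  have hpw_int := intervalIntegrable_of_measurable_of_abs_le hpwmeas hC
  have hg_int (a b : ℝ) : IntervalIntegrable (fun τ => entAbs B *ᵥ pw τ) volume a b :=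
    (hpw_int a b).continuous_mulVec continuous_const
  refine ⟨fun t ht => ?_, by simp [hpcheck], fun t ht =>
    (metzlerPart A).eq_add_integral_of_duhamel hg_int hpcheck ht⟩
  have hkernel_le (τ : ℝ) (hτ : τ ∈ Icc 0 t) :
      entAbs (exp ((t - τ) • A) * B) *ᵥ pw τ ≤
        exp ((t - τ) • metzlerPart A) *ᵥ (entAbs B *ᵥ pw τ) := by
    rw [Matrix.mulVec_mulVec]
    exact entAbs_mulVec_le (Matrix.abs_mul_apply_le
      (abs_exp_smul_apply_le_exp_smul_metzlerPart A (sub_nonneg.2 hτ.2)) fun _ _ => le_rfl)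
      (hpw τ)
  have hsub_cont (M : Matrix (Fin n) (Fin n) ℝ) : Continuous fun τ : ℝ => exp ((t - τ) • M) :=
    (Matrix.continuous_exp_smul M).comp (continuous_const.sub continuous_id)
  suffices px t ≤ pcheck t from fun i => this i
  rw [hpx, hpcheck, intervalIntegral.integral_of_le ht, intervalIntegral.integral_of_le ht]
  exact add_le_add (entAbs_mulVec_le (abs_exp_smul_apply_le_exp_smul_metzlerPart A ht) hpx0)
    (setIntegral_mono_on ((hpw_int 0 t).continuous_mulVec
      (continuous_entAbs.comp ((hsub_cont A).matrix_mul continuous_const))).1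
      ((hg_int 0 t).continuous_mulVec (hsub_cont _)).1 measurableSet_Ioc
      fun τ hτ => hkernel_le τ (Ioc_subset_Icc_self hτ))
end
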